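/- Assume r and θ are nonconstant. Then the resultant R₁(t,k) = Res_s(α, β_k) ∈ ℝ[t,k] is a nonzero polynomial of positive degree in k; in fact, R₁ vanishes identically on the line k = 0, so the variable k divides R₁(t,k). In particular R₁ is not a constant polynomial. -/

import Mathlib

/-- The Sylvester matrix of two polynomials p, q over a commutative ring, of size
(q.natDegree + p.natDegree): the first q.natDegree rows carry the shifted coefficient
vectors of p (written from the leading coefficient), the remaining p.natDegree rows
carry those of q. -/
noncomputable def sylvesterMatrix {R : Type*} [CommRing R] (p q : Polynomial R) :
    Matrix (Fin (q.natDegree + p.natDegree)) (Fin (q.natDegree + p.natDegree)) R :=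
  Matrix.of fun i j =>
    if (i : ℕ) < q.natDegree then
      (if (j : ℕ) ≤ p.natDegree + (i : ℕ) then p.coeff (p.natDegree + (i : ℕ) - (j : ℕ)) else 0)
    else
      (if (j : ℕ) ≤ q.natDegree + ((i : ℕ) - q.natDegree) then
        q.coeff (q.natDegree + ((i : ℕ) - q.natDegree) - (j : ℕ)) else 0)

/-- The resultant of two polynomials: the determinant of their Sylvester matrix. -/
noncomputable def resultant {R : Type*} [CommRing R] (p q : Polynomial R) : R :=
  (sylvesterMatrix p q).det

/- We work in ℝ[t,k][s]: the coefficient ring is MvPolynomial (Fin 2) ℝ with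
t = X 0 and k = X 1, and s is the variable of the univariate polynomial ring. -/

/-- p(t), as a constant (in s) polynomial over ℝ[t,k]. -/
noncomputable def atT (p : Polynomial ℝ) : Polynomial (MvPolynomial (Fin 2) ℝ) :=
  Polynomial.C (Polynomial.aeval (MvPolynomial.X 0) p)

/-- p(s), a polynomial in s over ℝ[t,k]. -/
noncomputable def atS (p : Polynomial ℝ) : Polynomial (MvPolynomial (Fin 2) ℝ) :=
  p.map (algebraMap ℝ (MvPolynomial (Fin 2) ℝ))

/-- α(t,s) = A(t)B(s) − A(s)B(t), as a polynomial in s over ℝ[t,k]. -/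
noncomputable def alphaS (A B : Polynomial ℝ) : Polynomial (MvPolynomial (Fin 2) ℝ) :=
  atT A * atS B - atS A * atT B

/-- β_k(t,s) = C(t)D(s) − C(s)D(t) − 2kπ·D(t)D(s), as a polynomial in s over ℝ[t,k],
with k an indeterminate (k = X 1). -/
noncomputable def betaS (C D : Polynomial ℝ) : Polynomial (MvPolynomial (Fin 2) ℝ) :=
  atT C * atS D - atS C * atT D -
    Polynomial.C (2 * MvPolynomial.X 1 * MvPolynomial.C Real.pi) * (atT D * atS D)

/-- R₁(t,k) = Res_s(α, β_k) ∈ ℝ[t,k]. -/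
noncomputable def res1 (A B C D : Polynomial ℝ) : MvPolynomial (Fin 2) ℝ :=
  resultant (alphaS A B) (betaS C D)

/-!
At `k = 0` both `α` and `β₀` vanish at `s = t`, so `R₁` vanishes on the line `k = 0`, i.e. `k ∣ R₁`.

For `R₁ ≠ 0` specialize `(t, k) ↦ (t₀, k₀) ∈ ℝ²`. For generic `t₀` the polynomial `α(t₀, s)` keeps
its `s`-degree. As `k₀` varies, `β_{k₀}(t₀, s) = l · D(s) - D(t₀) · C(s)` runs through a pencil
with `gcd(C, D) = 1`, so only finitely many of its members share a prime factor with `α(t₀, s)`.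
A coprime specialization has a nonzero resultant, hence `R₁ ≠ 0`, and then `k ∣ R₁` forces `R₁` to
have positive degree in `k`.
-/

open Polynomial hiding resultant

theorem resultant_eq_polynomial_resultant {R : Type*} [CommRing R] (p q : R[X]) :
    resultant p q = Polynomial.resultant p q := by
  -- Mathlib's Sylvester matrix is the transpose of this one, rows and columns listed backwards.
  let e : Fin (q.natDegree + p.natDegree) ≃ Fin (p.natDegree + q.natDegree) :=
    Fin.revPerm.trans (finCongr (add_comm _ _))
  have hM :
      sylvesterMatrix p q = (sylvester p q p.natDegree q.natDegree).transpose.submatrix e e := by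
    ext ⟨i, hi⟩ ⟨j, hj⟩
    simp only [sylvesterMatrix, sylvester, Matrix.of_apply, Matrix.submatrix_apply,
      Matrix.transpose_apply, e, Equiv.trans_apply, Fin.revPerm_apply, finCongr_apply]
    by_cases h : i < q.natDegree
    · have hcol : Fin.cast (add_comm _ _) (Fin.rev (⟨i, hi⟩ : Fin (q.natDegree + p.natDegree))) =
          Fin.natAdd p.natDegree (⟨q.natDegree - 1 - i, by omega⟩ : Fin q.natDegree) := by
        ext; simp; omega
      rw [hcol, Fin.addCases_right]
      simp only [if_pos h, Fin.val_cast, Fin.val_rev, Set.mem_Icc]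
      split_ifs <;> first | rfl | (congr 1; omega) | exact coeff_eq_zero_of_natDegree_lt (by omega)
    · have hcol : Fin.cast (add_comm _ _) (Fin.rev (⟨i, hi⟩ : Fin (q.natDegree + p.natDegree))) =
          Fin.castAdd q.natDegree
            (⟨q.natDegree + p.natDegree - 1 - i, by omega⟩ : Fin p.natDegree) := by
        ext; simp; omega
      rw [hcol, Fin.addCases_left]
      simp only [if_neg h, Fin.val_cast, Fin.val_rev, Set.mem_Icc]
      split_ifs <;> first | rfl | (congr 1; omega) | exact coeff_eq_zero_of_natDegree_lt (by omega)
  rw [resultant, hM, Matrix.det_submatrix_equiv_self, Matrix.det_transpose, Polynomial.resultant]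

namespace Polynomial

variable {R S : Type*} [CommRing R] [CommRing S]

theorem resultant_eq_zero_of_isRoot {f g : R[X]} {m n : ℕ} (hf : f.natDegree ≤ m)
    (hg : g.natDegree ≤ n) (hmn : m ≠ 0 ∨ n ≠ 0) {r : R} (hfr : f.IsRoot r) (hgr : g.IsRoot r) :
    resultant f g m n = 0 := by
  obtain ⟨a, b, -, -, h⟩ := exists_mul_add_mul_eq_C_resultant f g hf hg hmn
  simpa [hfr.eq_zero, hgr.eq_zero] using congr_arg (eval r) h.symm

theorem natDegree_eq_of_coeff_map_ne_zero (φ : R →+* S) {f : R[X]} {n : ℕ}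
    (hf : f.natDegree ≤ n) (h : (f.map φ).coeff n ≠ 0) : f.natDegree = n :=
  le_antisymm hf (le_natDegree_of_ne_zero fun h0 => h (by rw [coeff_map, h0, map_zero]))

theorem leadingCoeff_map_ne_zero_of_coeff_map_ne_zero (φ : R →+* S) {f : R[X]} {n : ℕ}
    (hf : f.natDegree ≤ n) (h : (f.map φ).coeff n ≠ 0) : φ f.leadingCoeff ≠ 0 := by
  rwa [leadingCoeff, natDegree_eq_of_coeff_map_ne_zero φ hf h, ← coeff_map]

theorem resultant_ne_zero_of_isCoprime_map [IsDomain S] (φ : R →+* S) {f g : R[X]}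
    (hf : φ f.leadingCoeff ≠ 0) (h : IsCoprime (f.map φ) (g.map φ)) : resultant f g ≠ 0 := by
  intro h0
  -- `g` may lose degree under `φ`; this costs only a power of the leading coefficient of `f.map φ`.
  have hdeg : (f.map φ).natDegree = f.natDegree := natDegree_map_of_leadingCoeff_ne_zero φ hf
  obtain ⟨k, hk⟩ := Nat.exists_eq_add_of_le (natDegree_map_le (f := φ) (p := g))
  have := resultant_add_right_deg (f.map φ) (g.map φ) f.natDegree _ k le_rfl
  rw [← hk, resultant_map_map, h0, map_zero, coeff_map, ← leadingCoeff, ← hdeg] at this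
  exact mul_ne_zero (pow_ne_zero _ hf) (resultant_ne_zero _ _ h) this.symm

variable {K : Type*} [Field K]

theorem coeff_eq_zero_of_C_coeff_mul_eq {A B : K[X]} (hAB : IsCoprime A B) {n : ℕ} (hn : 0 < n)
    (h : C (B.coeff n) * A = C (A.coeff n) * B) : A.coeff n = 0 := by
  by_contra hA
  have hdvd : A ∣ C (A.coeff n) := hAB.dvd_of_dvd_mul_right ⟨C (B.coeff n), by rw [← h, mul_comm]⟩
  have hA0 : A.natDegree = 0 := by simpa using natDegree_le_of_dvd hdvd (C_ne_zero.mpr hA)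
  exact hA (coeff_eq_zero_of_natDegree_lt (by omega))

theorem C_coeff_mul_sub_C_coeff_mul_ne_zero {A B : K[X]} (hAB : IsCoprime A B)
    (hn : 0 < max A.natDegree B.natDegree) :
    C (B.coeff (max A.natDegree B.natDegree)) * A - C (A.coeff (max A.natDegree B.natDegree)) * B
      ≠ 0 := by
  intro h
  rw [sub_eq_zero] at h
  have hA := coeff_eq_zero_of_C_coeff_mul_eq hAB hn h
  have hB := coeff_eq_zero_of_C_coeff_mul_eq hAB.symm hn h.symm
  rcases max_choice A.natDegree B.natDegree with hmax | hmax <;> rw [hmax] at hA hB hn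
  · exact ne_zero_of_natDegree_gt hn (leadingCoeff_eq_zero.mp hA)
  · exact ne_zero_of_natDegree_gt hn (leadingCoeff_eq_zero.mp hB)

theorem subsingleton_setOf_dvd_C_mul_sub {z P Q : K[X]} (hz : ¬IsUnit z) (hPQ : IsCoprime P Q) :
    {a : K | z ∣ C a * P - Q}.Subsingleton := by
  intro a ha b hb
  by_contra hab
  have hP : z ∣ P := by
    have : z ∣ C (a - b) * P := by simpa [C_sub, sub_mul] using dvd_sub ha hb
    exact (isUnit_C.mpr (sub_ne_zero.mpr hab).isUnit).dvd_mul_left.mp this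
  have hQ : z ∣ Q := by simpa using dvd_sub (dvd_mul_of_dvd_right hP (C a)) ha
  exact hz (hPQ.isUnit_of_dvd' hP hQ)

open UniqueFactorizationMonoid in
theorem finite_setOf_not_isCoprime_C_mul_sub {p P Q : K[X]} (hp : p ≠ 0) (hPQ : IsCoprime P Q) :
    {a : K | ¬IsCoprime p (C a * P - Q)}.Finite := by
  classical
  refine ((normalizedFactors p).toFinset.finite_toSet.biUnion
    fun z hz => (subsingleton_setOf_dvd_C_mul_sub (z := z) ?_ hPQ).finite).subset ?_
  · exact (prime_of_normalized_factor z (Multiset.mem_toFinset.mp hz)).not_isUnit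
  intro a ha
  obtain ⟨π, hπ, hπp, hπq⟩ : ∃ π : K[X], Prime π ∧ π ∣ p ∧ π ∣ C a * P - Q := by
    by_contra! h
    exact ha (isCoprime_of_prime_dvd (fun h0 => hp h0.1) h)
  obtain ⟨z, hz, hπz⟩ := exists_mem_normalizedFactors_of_dvd hp hπ.irreducible hπp
  exact Set.mem_biUnion (Multiset.mem_toFinset.mpr hz) (hπz.dvd_iff_dvd_left.mp hπq)

end Polynomial

namespace MvPolynomial

variable {R σ : Type*} [CommRing R]

theorem X_dvd_sub_aeval_update_zero [DecidableEq σ] (i : σ) (p : MvPolynomial σ R) :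
    X i ∣ p - aeval (Function.update X i 0) p := by
  induction p using MvPolynomial.induction_on with
  | C a => simp
  | add p q hp hq => simpa [add_sub_add_comm] using dvd_add hp hq
  | mul_X p j hp =>
    have : p * X j - aeval (Function.update X i 0) (p * X j) =
        (p - aeval (Function.update X i 0) p) * X j +
          aeval (Function.update X i 0) p * (X j - Function.update X i 0 j) := by
      simp only [map_mul, aeval_X]; ring
    rw [this]
    refine dvd_add (dvd_mul_of_dvd_left hp _) (dvd_mul_of_dvd_right ?_ _)
    rcases eq_or_ne j i with rfl | hj
    · simp
    · simp [hj]

theorem X_dvd_iff_aeval_update_zero_eq_zero [DecidableEq σ] {i : σ} {p : MvPolynomial σ R} :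
    X i ∣ p ↔ aeval (Function.update X i 0) p = (0 : MvPolynomial σ R) := by
  refine ⟨?_, fun h => by simpa only [h, sub_zero] using X_dvd_sub_aeval_update_zero i p⟩
  rintro ⟨q, rfl⟩
  simp

theorem degreeOf_pos_of_X_dvd [Nontrivial R] {i : σ} {p : MvPolynomial σ R} (h : X i ∣ p)
    (hp : p ≠ 0) : 0 < p.degreeOf i := by
  obtain ⟨q, rfl⟩ := h
  rw [mul_comm, (degreeOf_mul_X_eq_degreeOf_add_one_iff i q).mpr (right_ne_zero_of_mul hp)]
  omega

end MvPolynomial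

section AlphaBeta

variable (A B C D : ℝ[X]) (x : Fin 2 → ℝ)

theorem map_eval_atT : (atT A).map (MvPolynomial.eval x) = Polynomial.C (A.eval (x 0)) := by
  rw [atT, map_C, ← MvPolynomial.aeval_eq_eval, ← Polynomial.aeval_algHom_apply]
  simp

theorem map_eval_atS : (atS A).map (MvPolynomial.eval x) = A := by
  have : (MvPolynomial.eval x).comp (algebraMap ℝ (MvPolynomial (Fin 2) ℝ)) = RingHom.id ℝ :=
    RingHom.ext (MvPolynomial.eval_C (f := x))
  rw [atS, Polynomial.map_map, this, Polynomial.map_id]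

theorem map_eval_alphaS :
    (alphaS A B).map (MvPolynomial.eval x) =
      Polynomial.C (A.eval (x 0)) * B - A * Polynomial.C (B.eval (x 0)) := by
  simp only [alphaS, Polynomial.map_sub, Polynomial.map_mul, map_eval_atT, map_eval_atS]

theorem map_eval_betaS :
    (betaS C D).map (MvPolynomial.eval x) =
      Polynomial.C (C.eval (x 0) - 2 * x 1 * Real.pi * D.eval (x 0)) * D
        - Polynomial.C (D.eval (x 0)) * C := by
  simp only [betaS, Polynomial.map_sub, Polynomial.map_mul, map_eval_atT, map_eval_atS, map_C]
  simp only [map_mul, map_ofNat, MvPolynomial.eval_X, MvPolynomial.eval_C, Polynomial.C_sub]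
  ring

theorem natDegree_alphaS_le : (alphaS A B).natDegree ≤ max A.natDegree B.natDegree := by
  have h (p q : ℝ[X]) : (atT p * atS q).natDegree ≤ q.natDegree :=
    (natDegree_C_mul_le _ _).trans natDegree_map_le
  rw [alphaS, mul_comm (atS A)]
  exact (natDegree_sub_le _ _).trans
    (max_le ((h A B).trans (le_max_right _ _)) ((h B A).trans (le_max_left _ _)))

theorem alphaS_eval_X_zero : (alphaS A B).eval (MvPolynomial.X 0) = 0 := by
  simp only [alphaS, atT, atS, eval_sub, eval_mul, eval_C, eval_map, ← aeval_def]
  ring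

theorem betaS_eval_X_zero :
    (betaS C D).eval (MvPolynomial.X 0) =
      MvPolynomial.X 1 * (-(2 * MvPolynomial.C Real.pi) * aeval (MvPolynomial.X 0) D ^ 2) := by
  simp only [betaS, atT, atS, eval_sub, eval_mul, eval_C, eval_map, ← aeval_def]
  ring

end AlphaBeta

theorem X_one_dvd_res1 {A B C D : ℝ[X]} (hα : (alphaS A B).natDegree ≠ 0) :
    MvPolynomial.X 1 ∣ res1 A B C D := by
  set ψ : MvPolynomial (Fin 2) ℝ →+* MvPolynomial (Fin 2) ℝ :=
    (MvPolynomial.aeval (Function.update MvPolynomial.X 1 0)).toRingHom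
  have hψ0 : ψ (MvPolynomial.X 0) = MvPolynomial.X 0 := by simp [ψ]
  have hψ1 : ψ (MvPolynomial.X 1) = 0 := by simp [ψ]
  rw [MvPolynomial.X_dvd_iff_aeval_update_zero_eq_zero, res1, resultant_eq_polynomial_resultant]
  change ψ _ = 0
  rw [← Polynomial.resultant_map_map]
  refine Polynomial.resultant_eq_zero_of_isRoot natDegree_map_le natDegree_map_le (.inl hα)
    (r := MvPolynomial.X 0) ?_ ?_
  · rw [IsRoot, ← hψ0, eval_map_apply, alphaS_eval_X_zero, map_zero]
  · rw [IsRoot, ← hψ0, eval_map_apply, betaS_eval_X_zero, map_mul, hψ1, zero_mul]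

theorem exists_eval_isCoprime {A B C D : ℝ[X]} (hAB : IsCoprime A B) (hCD : IsCoprime C D)
    (hn : 0 < max A.natDegree B.natDegree) (hD : D ≠ 0) :
    ∃ x : Fin 2 → ℝ,
      ((alphaS A B).map (MvPolynomial.eval x)).coeff (max A.natDegree B.natDegree) ≠ 0 ∧
      IsCoprime ((alphaS A B).map (MvPolynomial.eval x))
        ((betaS C D).map (MvPolynomial.eval x)) := by
  set n := max A.natDegree B.natDegree
  set e := Polynomial.C (B.coeff n) * A - Polynomial.C (A.coeff n) * B
  obtain ⟨t, ht⟩ : ∃ t : ℝ, (e * D).eval t ≠ 0 := by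
    by_contra! h
    exact mul_ne_zero (C_coeff_mul_sub_C_coeff_mul_ne_zero hAB hn) hD
      (Polynomial.funext fun t => by rw [h t, eval_zero])
  rw [eval_mul] at ht
  set p := Polynomial.C (A.eval t) * B - A * Polynomial.C (B.eval t)
  have hp : p.coeff n = e.eval t := by
    simp only [p, e, coeff_sub, coeff_C_mul, coeff_mul_C, eval_sub, eval_mul, eval_C]
    ring
  have hp0 : p ≠ 0 := fun h => left_ne_zero_of_mul ht (by rw [← hp, h, coeff_zero])
  have hDC : IsCoprime D (Polynomial.C (D.eval t) * C) :=
    (isCoprime_mul_unit_left_right (isUnit_C.mpr (right_ne_zero_of_mul ht).isUnit) D C).mpr hCD.symm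
  obtain ⟨l, hl⟩ := (finite_setOf_not_isCoprime_C_mul_sub hp0 hDC).infinite_compl.nonempty
  -- `k₀` is chosen so that `C(t) - 2 k₀ π D(t) = l`.
  refine ⟨![t, (C.eval t - l) / (2 * Real.pi * D.eval t)], ?_, ?_⟩
  · rw [map_eval_alphaS]
    change p.coeff n ≠ 0
    rw [hp]
    exact left_ne_zero_of_mul ht
  · have hl' :
        C.eval t - 2 * ((C.eval t - l) / (2 * Real.pi * D.eval t)) * Real.pi * D.eval t = l := by
      field_simp [right_ne_zero_of_mul ht, Real.pi_ne_zero]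
      ring
    simpa [map_eval_alphaS, map_eval_betaS, hl'] using hl

theorem resultant_alpha_beta_nonconstant_in_k_general
    (A B C D : Polynomial ℝ) (hD : D ≠ 0)
    (hAB : IsCoprime A B) (hCD : IsCoprime C D)
    (hr : ¬ (A.natDegree = 0 ∧ B.natDegree = 0)) :
    res1 A B C D ≠ 0 ∧
    0 < (res1 A B C D).degreeOf 1 ∧
    MvPolynomial.X 1 ∣ res1 A B C D := by
  have hn : 0 < max A.natDegree B.natDegree := by omega
  obtain ⟨x, hlc, hcop⟩ := exists_eval_isCoprime hAB hCD hn hD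
  have hα : (alphaS A B).natDegree = max A.natDegree B.natDegree :=
    natDegree_eq_of_coeff_map_ne_zero _ (natDegree_alphaS_le A B) hlc
  have hne : res1 A B C D ≠ 0 := by
    rw [res1, resultant_eq_polynomial_resultant]
    exact Polynomial.resultant_ne_zero_of_isCoprime_map _
      (leadingCoeff_map_ne_zero_of_coeff_map_ne_zero _ (natDegree_alphaS_le A B) hlc) hcop
  have hdvd : MvPolynomial.X 1 ∣ res1 A B C D := X_one_dvd_res1 (hα ▸ hn.ne')
  exact ⟨hne, MvPolynomial.degreeOf_pos_of_X_dvd hdvd hne, hdvd⟩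

theorem resultant_alpha_beta_nonconstant_in_k
    (A B C D : Polynomial ℝ) (hB : B ≠ 0) (hD : D ≠ 0)
    (hAB : IsCoprime A B) (hCD : IsCoprime C D)
    (hr : ¬ (A.natDegree = 0 ∧ B.natDegree = 0))
    (hθ : ¬ (C.natDegree = 0 ∧ D.natDegree = 0)) :
    res1 A B C D ≠ 0 ∧
    0 < (res1 A B C D).degreeOf 1 ∧
    MvPolynomial.X 1 ∣ res1 A B C D :=
  resultant_alpha_beta_nonconstant_in_k_general A B C D hD hAB hCD hr
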